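/- Let μ, ν ∈ ℂ, c ≠ 0, m, r, s ∈ ℤ^N, g ∈ ġ and 1 ≤ a, b ≤ N. In the g(μ,ν)-module V_g(c) the following identities hold: (t₀t^s k₀)·(t₀^{-1}t^r d̃_a)·q^{m−r} = −s_a c q^{m+s}; (t₀t^s k_b)·(t₀^{-1}t^r d̃_a)·q^{m−r} = δ_{ab} c q^{m+s}; (t₀t^s⊗g)·(t₀^{-1}t^r d̃_a)·q^{m−r} = 0; (t₀t^s d̃₀)·(t₀^{-1}t^r d̃_a)·q^{m−r} = ((m_a − r_a) − 2(μ s_a − ν r_a)c) q^{m+s}; (t₀t^s d̃_b)·(t₀^{-1}t^r d̃_a)·q^{m−r} = (r_b(m_a − r_a) − s_a(m_b − r_b) − (μ r_b s_a + ν r_a s_b)c) q^{m+s}. -/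

import Mathlib

namespace ToroidalPaper

noncomputable section

/-- multi-indices r ∈ ℤ^{N+1} -/
abbrev Idx (N : ℕ) := Fin (N + 1) → ℤ

/-- The model for the 1-forms Ω¹_R: the free module on k₀,…,k_N over R,
written in the monomial basis t^r k_p. -/
abbrev OmegaR (N : ℕ) := Idx N →₀ (Fin (N + 1) → ℂ)

/-- The subspace d(R) ⊆ Ω¹_R of exact forms: d(t^r) = Σ_p r_p t^r k_p. -/
def dR (N : ℕ) : Submodule ℂ (OmegaR N) :=
  Submodule.span ℂ {w : OmegaR N | ∃ r : Idx N, w = Finsupp.single r fun p => (r p : ℂ)}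

/-- K = Ω¹_R / d(R) -/
abbrev Kmod (N : ℕ) := OmegaR N ⧸ dR N

variable (N : ℕ) (g : Type) [LieRing g] [LieAlgebra ℂ g]

/-- The underlying vector space of the full toroidal Lie algebra:
(R ⊗ ġ) ⊕ K ⊕ D, where R ⊗ ġ is modeled as `Idx N →₀ g` (coefficient of t^r)
and D as `Idx N →₀ (Fin (N+1) → ℂ)` (coefficients of t^r d_p). -/
abbrev Carrier := (Idx N →₀ g) × Kmod N × (Idx N →₀ (Fin (N + 1) → ℂ))

/-- A realization of the vector space (R⊗ġ) ⊕ K ⊕ D as a Lie algebra: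
a Lie algebra `G` together with a linear identification with the model. -/
structure Tor where
  G : Type
  [instLieRing : LieRing G]
  [instLieAlgebra : LieAlgebra ℂ G]
  e : G ≃ₗ[ℂ] Carrier N g

attribute [instance] Tor.instLieRing Tor.instLieAlgebra

namespace Tor

variable {N g}
variable (T : Tor N g)

/-- the element t^r ⊗ x of R ⊗ ġ -/
def tg (r : Idx N) (x : g) : T.G := T.e.symm (Finsupp.single r x, 0, 0)

/-- the element t^r k_p of K -/
def k (r : Idx N) (p : Fin (N + 1)) : T.G :=
  T.e.symm (0, Submodule.Quotient.mk (p := dR N) (Finsupp.single r (Pi.single p 1)), 0)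

/-- the element t^r d_p of D -/
def d (r : Idx N) (p : Fin (N + 1)) : T.G :=
  T.e.symm (0, 0, Finsupp.single r (Pi.single p 1))

/-- t^m · d(t^r) = Σ_p r_p t^{r+m} k_p -/
def kSum (r m : Idx N) : T.G := ∑ p : Fin (N + 1), (r p : ℂ) • T.k (r + m) p

/-- The bracket relations of the full toroidal Lie algebra g(μ,ν). -/
structure IsToroidal (B : g →ₗ[ℂ] g →ₗ[ℂ] ℂ) (μ ν : ℂ) : Prop where
  br_gg : ∀ (r m : Idx N) (x y : g),
    ⁅T.tg r x, T.tg m y⁆ = T.tg (r + m) ⁅x, y⁆ + B x y • T.kSum r m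
  br_kg : ∀ (r m : Idx N) (p : Fin (N + 1)) (x : g), ⁅T.k r p, T.tg m x⁆ = 0
  br_kk : ∀ (r m : Idx N) (p q : Fin (N + 1)), ⁅T.k r p, T.k m q⁆ = 0
  br_dg : ∀ (r m : Idx N) (a : Fin (N + 1)) (x : g),
    ⁅T.d r a, T.tg m x⁆ = (m a : ℂ) • T.tg (r + m) x
  br_dk : ∀ (r m : Idx N) (a b : Fin (N + 1)),
    ⁅T.d r a, T.k m b⁆ = (m a : ℂ) • T.k (r + m) b
      + (if a = b then (1 : ℂ) else 0) • T.kSum r m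
  br_dd : ∀ (r m : Idx N) (a b : Fin (N + 1)),
    ⁅T.d r a, T.d m b⁆ = (m a : ℂ) • T.d (r + m) b - (r b : ℂ) • T.d (r + m) a
      + (μ * (m a : ℂ) * (r b : ℂ) + ν * (r a : ℂ) * (m b : ℂ)) •
          (∑ p : Fin (N + 1), (m p : ℂ) • T.k (r + m) p)

end Tor

end

end ToroidalPaper

namespace ToroidalPaper

noncomputable section

open scoped TensorProduct

attribute [local instance 100] LieRing.ofAssociativeRing

/-- the multi-index of t₀^j t^r, r ∈ ℤ^N -/
def mIdx {N : ℕ} (j : ℤ) (r : Fin N → ℤ) : Idx N := Fin.cons j r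

/-- the standard basis vector ε_p of ℤ^N -/
def eps {N : ℕ} (p : Fin N) : Fin N → ℤ := Pi.single p 1

/-- the top T₀ = ℂ[q₁^±,…,q_N^±] -/
def T0c (N : ℕ) : Type := (Fin N → ℤ) →₀ ℂ

instance {N : ℕ} : AddCommGroup (T0c N) :=
  inferInstanceAs (AddCommGroup ((Fin N → ℤ) →₀ ℂ))

instance {N : ℕ} : Module ℂ (T0c N) :=
  inferInstanceAs (Module ℂ ((Fin N → ℤ) →₀ ℂ))

/-- the monomial q^m ∈ T₀ -/
def bq {N : ℕ} (m : Fin N → ℤ) : T0c N :=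
  show ((Fin N → ℤ) →₀ ℂ) from Finsupp.single m 1

namespace Tor

variable {N : ℕ} {g : Type} [LieRing g] [LieAlgebra ℂ g] (T : Tor N g)

/-- t₀^j t^r d̃_p = t₀^j t^r d_p − ν r_p t₀^j t^r k₀ (p = 1,…,N) -/
def dT (ν : ℂ) (j : ℤ) (r : Fin N → ℤ) (p : Fin N) : T.G :=
  T.d (mIdx j r) p.succ - (ν * (r p : ℂ)) • T.k (mIdx j r) 0

/-- t₀^j t^r d̃₀ = −t₀^j t^r d₀ + (μ+ν)(j+1/2) t₀^j t^r k₀ -/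
def dT0 (μ ν : ℂ) (j : ℤ) (r : Fin N → ℤ) : T.G :=
  - T.d (mIdx j r) 0 + ((μ + ν) * ((j : ℂ) + 1 / 2)) • T.k (mIdx j r) 0

/-- the universal enveloping algebra U(g(μ,ν)) -/
abbrev U := UniversalEnvelopingAlgebra ℂ T.G

/-- the canonical embedding g(μ,ν) → U(g(μ,ν)) -/
def uι : T.G →ₗ⁅ℂ⁆ T.U := UniversalEnvelopingAlgebra.ι ℂ

/-- The spanning set of the subalgebra g^(+):  t₀^j t^r k₀ (j ≥ 1);
t₀^j t^r k_p, t₀^j t^r ⊗ g, t₀^j t^r d̃_p (j ≥ 0, 1 ≤ p ≤ N);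
t₀^j t^r d̃₀ (j ≥ -1). -/
def gPlusGen (μ ν : ℂ) : Set T.G :=
  {z | ∃ (j : ℤ) (r : Fin N → ℤ),
    (1 ≤ j ∧ z = T.k (mIdx j r) 0)
    ∨ (∃ p : Fin N, 0 ≤ j ∧ z = T.k (mIdx j r) p.succ)
    ∨ (∃ x : g, 0 ≤ j ∧ z = T.tg (mIdx j r) x)
    ∨ (∃ p : Fin N, 0 ≤ j ∧ z = T.dT ν j r p)
    ∨ (-1 ≤ j ∧ z = T.dT0 μ ν j r)}

/-- V_g = U(g) ⊗_{U(g^(+))} ℂ1, realized as the quotient of U(g) by the left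
ideal generated by g^(+). -/
def Vg (μ ν : ℂ) :=
  T.U ⧸ Submodule.span T.U ((⇑(T.uι)) '' T.gPlusGen μ ν)

instance (μ ν : ℂ) : AddCommGroup (T.Vg μ ν) :=
  inferInstanceAs (AddCommGroup (T.U ⧸ _))

instance (μ ν : ℂ) : Module T.U (T.Vg μ ν) :=
  inferInstanceAs (Module T.U (T.U ⧸ _))

instance (μ ν : ℂ) : Module ℂ (T.Vg μ ν) :=
  inferInstanceAs (Module ℂ (T.U ⧸ _))

instance (μ ν : ℂ) : IsScalarTower ℂ T.U (T.Vg μ ν) :=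
  inferInstanceAs (IsScalarTower ℂ T.U (T.U ⧸ _))

/-- the highest weight vector 1 ∈ V_g -/
def vac (μ ν : ℂ) : T.Vg μ ν := Submodule.Quotient.mk 1

/-- the set S = {k₀1 − c·1, (t^r k₀)(t^m k₀)1 − c (t^{r+m} k₀)1} -/
def Sset (μ ν c : ℂ) : Set (T.Vg μ ν) :=
  {w | w = T.uι (T.k (mIdx 0 0) 0) • T.vac μ ν - c • T.vac μ ν
    ∨ ∃ r m : Fin N → ℤ,
      w = T.uι (T.k (mIdx 0 r) 0) • (T.uι (T.k (mIdx 0 m) 0) • T.vac μ ν)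
        - c • (T.uι (T.k (mIdx 0 (r + m)) 0) • T.vac μ ν)}

/-- the g(μ,ν)-submodule R(S) of V_g generated by S -/
def RS (μ ν c : ℂ) : Submodule T.U (T.Vg μ ν) :=
  Submodule.span T.U (T.Sset μ ν c)

/-- V_g(c) = V_g / R(S) -/
def VgC (μ ν c : ℂ) := T.Vg μ ν ⧸ T.RS μ ν c

instance (μ ν c : ℂ) : AddCommGroup (T.VgC μ ν c) :=
  inferInstanceAs (AddCommGroup (T.Vg μ ν ⧸ _))

instance (μ ν c : ℂ) : Module T.U (T.VgC μ ν c) :=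
  inferInstanceAs (Module T.U (T.Vg μ ν ⧸ _))

instance (μ ν c : ℂ) : Module ℂ (T.VgC μ ν c) :=
  inferInstanceAs (Module ℂ (T.Vg μ ν ⧸ T.RS μ ν c))

instance (μ ν c : ℂ) : IsScalarTower ℂ T.U (T.VgC μ ν c) :=
  inferInstanceAs (IsScalarTower ℂ T.U (T.Vg μ ν ⧸ T.RS μ ν c))

/-- q^m = (1/c) (t^m k₀) 1 ∈ V_g(c) -/
def qm (μ ν c : ℂ) (m : Fin N → ℤ) : T.VgC μ ν c :=
  c⁻¹ • (Submodule.Quotient.mk (T.uι (T.k (mIdx 0 m) 0) • T.vac μ ν))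

/-- The defining relations of the generalized Verma module M(T₀):
for each generator x of the subalgebra g₀ ⊕ g₊ and each basis vector q^m of
T₀ = ℂ[q₁^±,…,q_N^±], the relator (u·x) ⊗ q^m − u ⊗ (x·q^m), where the action
of g₀ on T₀ is (t^m k₀)q^r = c q^{r+m}, (t^m k_p)q^r = 0, (t^m ⊗ g)q^r = 0,
(t^m d₀)q^r = ½(μ+ν)c q^{r+m}, (t^m d_p)q^r = (r_p + νc m_p) q^{r+m}, and g₊
acts trivially. -/
def RelT0 (μ ν c : ℂ) : Set (T.U ⊗[ℂ] T0c N) :=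
  {z | (∃ (u : T.U) (r m' : Fin N → ℤ),
        z = (u * T.uι (T.k (mIdx 0 r) 0)) ⊗ₜ[ℂ] bq m'
          - u ⊗ₜ[ℂ] (c • bq (m' + r)))
    ∨ (∃ (u : T.U) (j : ℤ) (r m' : Fin N → ℤ) (p : Fin (N + 1)), 1 ≤ j ∧
        z = (u * T.uι (T.k (mIdx j r) p)) ⊗ₜ[ℂ] bq m')
    ∨ (∃ (u : T.U) (r m' : Fin N → ℤ) (p : Fin N),
        z = (u * T.uι (T.k (mIdx 0 r) p.succ)) ⊗ₜ[ℂ] bq m')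
    ∨ (∃ (u : T.U) (j : ℤ) (r m' : Fin N → ℤ) (x : g), 0 ≤ j ∧
        z = (u * T.uι (T.tg (mIdx j r) x)) ⊗ₜ[ℂ] bq m')
    ∨ (∃ (u : T.U) (j : ℤ) (r m' : Fin N → ℤ) (p : Fin (N + 1)), 1 ≤ j ∧
        z = (u * T.uι (T.d (mIdx j r) p)) ⊗ₜ[ℂ] bq m')
    ∨ (∃ (u : T.U) (r m' : Fin N → ℤ),
        z = (u * T.uι (T.d (mIdx 0 r) 0)) ⊗ₜ[ℂ] bq m'
          - u ⊗ₜ[ℂ] (((μ + ν) * c / 2) • bq (m' + r)))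
    ∨ (∃ (u : T.U) (r m' : Fin N → ℤ) (s : Fin N),
        z = (u * T.uι (T.d (mIdx 0 r) s.succ)) ⊗ₜ[ℂ] bq m'
          - u ⊗ₜ[ℂ] (((m' s : ℂ) + ν * c * (r s : ℂ)) • bq (m' + r)))}

/-- the generalized Verma module M(T₀) -/
def MT0 (μ ν c : ℂ) := (T.U ⊗[ℂ] T0c N) ⧸ Submodule.span T.U (T.RelT0 μ ν c)

instance (μ ν c : ℂ) : AddCommGroup (T.MT0 μ ν c) :=
  inferInstanceAs (AddCommGroup ((T.U ⊗[ℂ] T0c N) ⧸ _))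

instance (μ ν c : ℂ) : Module T.U (T.MT0 μ ν c) :=
  inferInstanceAs (Module T.U ((T.U ⊗[ℂ] T0c N) ⧸ _))

instance (μ ν c : ℂ) : Module ℂ (T.MT0 μ ν c) :=
  inferInstanceAs
    (Module ℂ ((T.U ⊗[ℂ] T0c N) ⧸ Submodule.span T.U (T.RelT0 μ ν c)))

instance (μ ν c : ℂ) : IsScalarTower ℂ T.U (T.MT0 μ ν c) :=
  inferInstanceAs
    (IsScalarTower ℂ T.U ((T.U ⊗[ℂ] T0c N) ⧸ Submodule.span T.U (T.RelT0 μ ν c)))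

/-- the (unique) maximal proper submodule M^rad of M(T₀), realized as the sum
of all proper submodules -/
def Mrad (μ ν c : ℂ) : Submodule T.U (T.MT0 μ ν c) :=
  sSup {P : Submodule T.U (T.MT0 μ ν c) | P ≠ ⊤}

/-- L(T₀) = M(T₀)/M^rad, the irreducible quotient of M(T₀) -/
def LT0 (μ ν c : ℂ) := T.MT0 μ ν c ⧸ T.Mrad μ ν c

instance (μ ν c : ℂ) : AddCommGroup (T.LT0 μ ν c) :=
  inferInstanceAs (AddCommGroup (T.MT0 μ ν c ⧸ _))

instance (μ ν c : ℂ) : Module T.U (T.LT0 μ ν c) :=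
  inferInstanceAs (Module T.U (T.MT0 μ ν c ⧸ _))

instance (μ ν c : ℂ) : Module ℂ (T.LT0 μ ν c) :=
  inferInstanceAs (Module ℂ (T.MT0 μ ν c ⧸ T.Mrad μ ν c))

instance (μ ν c : ℂ) : IsScalarTower ℂ T.U (T.LT0 μ ν c) :=
  inferInstanceAs (IsScalarTower ℂ T.U (T.MT0 μ ν c ⧸ T.Mrad μ ν c))

/-- the image of q^m ∈ T₀ in L(T₀) -/
def qL (μ ν c : ℂ) (m : Fin N → ℤ) : T.LT0 μ ν c :=
  Submodule.Quotient.mk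
    (Submodule.Quotient.mk ((1 : T.U) ⊗ₜ[ℂ] bq m))

/-- the element E^m_{pa} = (t₀^{-1}t^{ε_p} d̃_a)q^{m−ε_p} − (t₀^{-1}d̃_a)q^m
+ (1/c) δ_{ap} (t₀^{-1}k_p)q^m of L(T₀) -/
def Em (μ ν c : ℂ) (m : Fin N → ℤ) (p a : Fin N) : T.LT0 μ ν c :=
  T.uι (T.dT ν (-1) (eps p) a) • T.qL μ ν c (m - eps p)
    - T.uι (T.dT ν (-1) 0 a) • T.qL μ ν c m
    + (if a = p then c⁻¹ else 0) • (T.uι (T.k (mIdx (-1) 0) p.succ) • T.qL μ ν c m)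

end Tor

end

end ToroidalPaper
namespace ToroidalPaper

noncomputable section

namespace Tor

variable {N : ℕ} {g : Type} [LieRing g] [LieAlgebra ℂ g] (T : Tor N g)
attribute [local instance 100] LieRing.ofAssociativeRing

lemma mIdx_add (j j' : ℤ) (r r' : Fin N → ℤ) :
    mIdx j r + mIdx j' r' = mIdx (j + j') (r + r') := by
  funext i
  refine Fin.cases ?_ (fun p => ?_) i <;> simp [mIdx]

lemma mIdx_zero (j : ℤ) (r : Fin N → ℤ) : mIdx j r 0 = j := rfl

lemma mIdx_succ (j : ℤ) (r : Fin N → ℤ) (p : Fin N) : mIdx j r p.succ = r p := by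
  simp [mIdx]

/-- vacuum class in VgC -/
def vC (μ ν c : ℂ) : T.VgC μ ν c := Submodule.Quotient.mk (T.vac μ ν)

lemma qm_eq (μ ν c : ℂ) (m : Fin N → ℤ) :
    T.qm μ ν c m = c⁻¹ • (T.uι (T.k (mIdx 0 m) 0) • T.vC μ ν c) := rfl

lemma smul_vC_of_mem {μ ν c : ℂ} {z : T.G} (hz : z ∈ T.gPlusGen μ ν) :
    T.uι z • T.vC μ ν c = 0 := by
  have h1 : T.uι z • T.vac μ ν = 0 := by
    show T.uι z • (Submodule.Quotient.mk (1 : T.U) :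
      T.U ⧸ Submodule.span T.U ((⇑(T.uι)) '' T.gPlusGen μ ν)) = 0
    rw [← Submodule.Quotient.mk_smul, smul_eq_mul, mul_one, Submodule.Quotient.mk_eq_zero]
    exact Submodule.subset_span ⟨z, hz, rfl⟩
  show T.uι z • (Submodule.Quotient.mk (T.vac μ ν) : T.VgC μ ν c) = 0
  rw [← Submodule.Quotient.mk_smul, h1, Submodule.Quotient.mk_zero]

lemma swap_smul {μ ν c : ℂ} (x y : T.G) (v : T.VgC μ ν c) :
    T.uι x • (T.uι y • v) = T.uι y • (T.uι x • v) + T.uι ⁅x, y⁆ • v := by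
  have h : T.uι x * T.uι y = T.uι y * T.uι x + T.uι ⁅x, y⁆ := by
    rw [LieHom.map_lie, Ring.lie_def]; abel
  rw [← mul_smul, h, add_smul, mul_smul]

lemma csmul_comm {μ ν c : ℂ} (a : ℂ) (u : T.U) (v : T.VgC μ ν c) :
    u • (a • v) = a • (u • v) := smul_comm u a v

end Tor
end
end ToroidalPaper
namespace ToroidalPaper
noncomputable section
namespace Tor
variable {N : ℕ} {g : Type} [LieRing g] [LieAlgebra ℂ g] (T : Tor N g)
attribute [local instance 100] LieRing.ofAssociativeRing
variable {μ ν c : ℂ}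

lemma kk_vC (x w : Fin N → ℤ) :
    T.uι (T.k (mIdx 0 x) 0) • (T.uι (T.k (mIdx 0 w) 0) • T.vC μ ν c)
      = c • (T.uι (T.k (mIdx 0 (x + w)) 0) • T.vC μ ν c) := by
  have hmem : (T.uι (T.k (mIdx 0 x) 0) • (T.uι (T.k (mIdx 0 w) 0) • T.vac μ ν)
      - c • (T.uι (T.k (mIdx 0 (x + w)) 0) • T.vac μ ν)) ∈ T.RS μ ν c :=
    Submodule.subset_span (Or.inr ⟨x, w, rfl⟩)
  have h0 := (Submodule.Quotient.mk_eq_zero (T.RS μ ν c)).2 hmem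
  rw [Submodule.Quotient.mk_sub, sub_eq_zero] at h0
  show Submodule.Quotient.mk _ = c • Submodule.Quotient.mk _
  rw [Submodule.Quotient.mk_smul, Submodule.Quotient.mk_smul] at h0 ⊢
  rw [Submodule.Quotient.mk_smul] at h0
  exact h0

lemma k0_vC (hc : c ≠ 0) (x : Fin N → ℤ) :
    T.uι (T.k (mIdx 0 x) 0) • T.vC μ ν c = c • T.qm μ ν c x := by
  rw [qm_eq, smul_smul, mul_inv_cancel₀ hc, one_smul]

lemma act_qm (z : T.G) (w : Fin N → ℤ) :
    T.uι z • T.qm μ ν c w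
      = c⁻¹ • (T.uι (T.k (mIdx 0 w) 0) • (T.uι z • T.vC μ ν c)
          + T.uι ⁅z, T.k (mIdx 0 w) 0⁆ • T.vC μ ν c) := by
  rw [qm_eq, csmul_comm, swap_smul]

lemma k0_qm (hc : c ≠ 0) (x w : Fin N → ℤ) :
    T.uι (T.k (mIdx 0 x) 0) • T.qm μ ν c w = c • T.qm μ ν c (x + w) := by
  rw [qm_eq, csmul_comm, kk_vC, k0_vC T hc, smul_smul, smul_smul,
    inv_mul_cancel₀ hc, one_mul]

end Tor
end
end ToroidalPaper
namespace ToroidalPaper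
noncomputable section
namespace Tor
variable {N : ℕ} {g : Type} [LieRing g] [LieAlgebra ℂ g] (T : Tor N g)
attribute [local instance 100] LieRing.ofAssociativeRing
variable {B : g →ₗ[ℂ] g →ₗ[ℂ] ℂ} {μ ν c : ℂ}

lemma kpos0_vC {j : ℤ} (hj : 1 ≤ j) (x : Fin N → ℤ) :
    T.uι (T.k (mIdx j x) 0) • T.vC μ ν c = 0 :=
  T.smul_vC_of_mem ⟨j, x, Or.inl ⟨hj, rfl⟩⟩

lemma ksucc_vC {j : ℤ} (hj : 0 ≤ j) (x : Fin N → ℤ) (p : Fin N) :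
    T.uι (T.k (mIdx j x) p.succ) • T.vC μ ν c = 0 :=
  T.smul_vC_of_mem ⟨j, x, Or.inr (Or.inl ⟨p, hj, rfl⟩)⟩

lemma tg_vC {j : ℤ} (hj : 0 ≤ j) (x : Fin N → ℤ) (y : g) :
    T.uι (T.tg (mIdx j x) y) • T.vC μ ν c = 0 :=
  T.smul_vC_of_mem ⟨j, x, Or.inr (Or.inr (Or.inl ⟨y, hj, rfl⟩))⟩

lemma dT_vC {j : ℤ} (hj : 0 ≤ j) (x : Fin N → ℤ) (p : Fin N) :
    T.uι (T.dT ν j x p) • T.vC μ ν c = 0 :=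
  T.smul_vC_of_mem ⟨j, x, Or.inr (Or.inr (Or.inr (Or.inl ⟨p, hj, rfl⟩)))⟩

lemma dT0_vC {j : ℤ} (hj : -1 ≤ j) (x : Fin N → ℤ) :
    T.uι (T.dT0 μ ν j x) • T.vC μ ν c = 0 :=
  T.smul_vC_of_mem ⟨j, x, Or.inr (Or.inr (Or.inr (Or.inr ⟨hj, rfl⟩)))⟩

lemma d_eq_dT (j : ℤ) (x : Fin N → ℤ) (p : Fin N) :
    T.d (mIdx j x) p.succ = T.dT ν j x p + (ν * (x p : ℂ)) • T.k (mIdx j x) 0 := by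
  rw [dT]; abel

lemma d_eq_dT0 (j : ℤ) (x : Fin N → ℤ) :
    T.d (mIdx j x) 0 = ((μ + ν) * ((j : ℂ) + 1 / 2)) • T.k (mIdx j x) 0 - T.dT0 μ ν j x := by
  rw [dT0]; abel

lemma d0succ_vC (x : Fin N → ℤ) (p : Fin N) :
    T.uι (T.d (mIdx 0 x) p.succ) • T.vC μ ν c
      = (ν * (x p : ℂ)) • (T.uι (T.k (mIdx 0 x) 0) • T.vC μ ν c) := by
  rw [T.d_eq_dT (ν := ν) 0 x p, map_add, map_smul, add_smul, T.dT_vC le_rfl, zero_add,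
    smul_assoc]

lemma d00_vC (x : Fin N → ℤ) :
    T.uι (T.d (mIdx 0 x) 0) • T.vC μ ν c
      = ((μ + ν) / 2) • (T.uι (T.k (mIdx 0 x) 0) • T.vC μ ν c) := by
  rw [T.d_eq_dT0 (μ := μ) (ν := ν) 0 x, map_sub, map_smul, sub_smul, T.dT0_vC (by norm_num) x,
    sub_zero, smul_assoc]
  push_cast
  ring_nf

lemma d1_vC (x : Fin N → ℤ) (p : Fin (N + 1)) :
    T.uι (T.d (mIdx 1 x) p) • T.vC μ ν c = 0 := by
  refine Fin.cases ?_ (fun q => ?_) p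
  · rw [T.d_eq_dT0 (μ := μ) (ν := ν) 1 x, map_sub, map_smul, sub_smul,
      T.dT0_vC (by norm_num) x, sub_zero, smul_assoc, T.kpos0_vC le_rfl, smul_zero]
  · rw [T.d_eq_dT (ν := ν) 1 x q, map_add, map_smul, add_smul, T.dT_vC (by norm_num) x,
      zero_add, smul_assoc, T.kpos0_vC le_rfl, smul_zero]

lemma uι_kSum_smul (r m : Idx N) (v : T.VgC μ ν c) :
    T.uι (T.kSum r m) • v = ∑ p : Fin (N + 1), (r p : ℂ) • (T.uι (T.k (r + m) p) • v) := by
  have h : T.uι (∑ p : Fin (N + 1), (r p : ℂ) • T.k (r + m) p)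
      = ∑ p : Fin (N + 1), (r p : ℂ) • T.uι (T.k (r + m) p) := by
    rw [← LieHom.coe_toLinearMap, map_sum]
    simp
  rw [kSum, h, Finset.sum_smul]
  exact Finset.sum_congr rfl fun p _ => smul_assoc _ _ _

end Tor
end
end ToroidalPaper
namespace ToroidalPaper
noncomputable section
namespace Tor
variable {N : ℕ} {g : Type} [LieRing g] [LieAlgebra ℂ g] (T : Tor N g)
attribute [local instance 100] LieRing.ofAssociativeRing
variable {B : g →ₗ[ℂ] g →ₗ[ℂ] ℂ} {μ ν c : ℂ}

lemma uι_lincomb_smul {ι : Type*} (t : Finset ι) (f : ι → ℂ) (z : ι → T.G)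
    (v : T.VgC μ ν c) :
    T.uι (∑ p ∈ t, f p • z p) • v = ∑ p ∈ t, f p • (T.uι (z p) • v) := by
  have h : T.uι (∑ p ∈ t, f p • z p) = ∑ p ∈ t, f p • T.uι (z p) := by
    rw [← LieHom.coe_toLinearMap, map_sum]
    simp
  rw [h, Finset.sum_smul]
  exact Finset.sum_congr rfl fun p _ => smul_assoc _ _ _

lemma ksucc_qm (hT : T.IsToroidal B μ ν) {j : ℤ} (hj : 0 ≤ j)
    (x w : Fin N → ℤ) (p : Fin N) :
    T.uι (T.k (mIdx j x) p.succ) • T.qm μ ν c w = 0 := by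
  rw [act_qm, hT.br_kk, map_zero, zero_smul, T.ksucc_vC hj, smul_zero,
    add_zero, smul_zero]

lemma kpos0_qm (hT : T.IsToroidal B μ ν) {j : ℤ} (hj : 1 ≤ j)
    (x w : Fin N → ℤ) :
    T.uι (T.k (mIdx j x) 0) • T.qm μ ν c w = 0 := by
  rw [act_qm, hT.br_kk, map_zero, zero_smul, T.kpos0_vC hj, smul_zero,
    add_zero, smul_zero]

lemma tg_qm (hT : T.IsToroidal B μ ν) {j : ℤ} (hj : 0 ≤ j)
    (x w : Fin N → ℤ) (y : g) :
    T.uι (T.tg (mIdx j x) y) • T.qm μ ν c w = 0 := by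
  have hb : ⁅T.tg (mIdx j x) y, T.k (mIdx 0 w) 0⁆ = 0 := by
    rw [← lie_skew, hT.br_kg, neg_zero]
  rw [act_qm, hb, map_zero, zero_smul, T.tg_vC hj, smul_zero, add_zero, smul_zero]

lemma ksucc0_vC (x : Fin N → ℤ) (p : Fin N) :
    T.uι (T.k (mIdx 0 x) p.succ) • T.vC μ ν c = 0 := T.ksucc_vC le_rfl x p

lemma ksucc1_vC (x : Fin N → ℤ) (p : Fin N) :
    T.uι (T.k (mIdx 1 x) p.succ) • T.vC μ ν c = 0 := T.ksucc_vC (by norm_num) x p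

lemma kpos1_vC (x : Fin N → ℤ) :
    T.uι (T.k (mIdx 1 x) 0) • T.vC μ ν c = 0 := T.kpos0_vC le_rfl x

lemma d00_qm (hT : T.IsToroidal B μ ν) (hc : c ≠ 0) (x w : Fin N → ℤ) :
    T.uι (T.d (mIdx 0 x) 0) • T.qm μ ν c w = ((μ + ν) * c / 2) • T.qm μ ν c (x + w) := by
  rw [act_qm, hT.br_dk, d00_vC]
  simp only [map_add, map_smul, add_smul, smul_assoc, uι_kSum_smul,
    mIdx_add, Fin.sum_univ_succ, mIdx_zero, mIdx_succ, Int.cast_zero, zero_smul,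
    zero_add, add_zero, ksucc0_vC, smul_zero, Finset.sum_const_zero, csmul_comm,
    kk_vC, if_pos]
  rw [T.k0_vC hc, add_comm w x]
  match_scalars
  field_simp
end Tor
end
end ToroidalPaper
namespace ToroidalPaper
noncomputable section
namespace Tor
variable {N : ℕ} {g : Type} [LieRing g] [LieAlgebra ℂ g] (T : Tor N g)
attribute [local instance 100] LieRing.ofAssociativeRing
variable {B : g →ₗ[ℂ] g →ₗ[ℂ] ℂ} {μ ν c : ℂ}

lemma mAdd_neg1_1 (r s : Fin N → ℤ) : mIdx (-1) r + mIdx 1 s = mIdx 0 (r + s) := by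
  rw [mIdx_add]; norm_num

lemma mAdd_1_neg1 (s r : Fin N → ℤ) : mIdx 1 s + mIdx (-1) r = mIdx 0 (s + r) := by
  rw [mIdx_add]; norm_num

lemma mAdd_1_0 (s w : Fin N → ℤ) : mIdx 1 s + mIdx 0 w = mIdx 1 (s + w) := by
  rw [mIdx_add]; norm_num

lemma mAdd_0_0 (x w : Fin N → ℤ) : mIdx 0 x + mIdx 0 w = mIdx 0 (x + w) := by
  rw [mIdx_add]; norm_num

lemma d0succ_qm (hT : T.IsToroidal B μ ν) (hc : c ≠ 0) (x w : Fin N → ℤ) (p : Fin N) :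
    T.uι (T.d (mIdx 0 x) p.succ) • T.qm μ ν c w
      = ((w p : ℂ) + ν * c * (x p : ℂ)) • T.qm μ ν c (x + w) := by
  rw [act_qm, hT.br_dk, d0succ_vC]
  simp only [map_add, map_smul, add_smul, smul_assoc, uι_kSum_smul,
    mAdd_0_0, Fin.sum_univ_succ, mIdx_zero, mIdx_succ, Int.cast_zero, zero_smul,
    zero_add, add_zero, ksucc0_vC, smul_zero, Finset.sum_const_zero, csmul_comm,
    kk_vC, Fin.succ_ne_zero, if_false, ite_false]
  simp only [T.k0_vC hc]
  rw [add_comm w x]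
  match_scalars
  field_simp
  ring

lemma d1_qm (hT : T.IsToroidal B μ ν) (x w : Fin N → ℤ) (p : Fin (N + 1)) :
    T.uι (T.d (mIdx 1 x) p) • T.qm μ ν c w = 0 := by
  rw [act_qm, hT.br_dk, d1_vC, smul_zero, zero_add]
  simp only [map_add, map_smul, add_smul, smul_assoc, uι_kSum_smul,
    mAdd_1_0, Fin.sum_univ_succ, mIdx_zero, mIdx_succ, kpos1_vC, ksucc1_vC,
    smul_zero, Finset.sum_const_zero, add_zero, zero_add]

lemma dT0_1_qm (hT : T.IsToroidal B μ ν) (s w : Fin N → ℤ) :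
    T.uι (T.dT0 μ ν 1 s) • T.qm μ ν c w = 0 := by
  rw [dT0, map_add, map_neg, map_smul, add_smul, neg_smul,
    smul_assoc, d1_qm T hT, kpos0_qm T hT le_rfl, smul_zero, neg_zero, zero_add]

lemma dT_1_qm (hT : T.IsToroidal B μ ν) (s w : Fin N → ℤ) (b : Fin N) :
    T.uι (T.dT ν 1 s b) • T.qm μ ν c w = 0 := by
  rw [dT, map_sub, map_smul, sub_smul, smul_assoc, d1_qm T hT,
    kpos0_qm T hT le_rfl, smul_zero, sub_zero]

end Tor
end
end ToroidalPaper
namespace ToroidalPaper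
noncomputable section
namespace Tor
variable {N : ℕ} {g : Type} [LieRing g] [LieAlgebra ℂ g] (T : Tor N g)
attribute [local instance 100] LieRing.ofAssociativeRing
variable {B : g →ₗ[ℂ] g →ₗ[ℂ] ℂ} {μ ν c : ℂ}

lemma idx_rs (m r s : Fin N → ℤ) : r + s + (m - r) = m + s := by ring

lemma part1 (hT : T.IsToroidal B μ ν) (hc : c ≠ 0) (m r s : Fin N → ℤ) (a : Fin N) :
    T.uι (T.k (mIdx 1 s) 0) • (T.uι (T.dT ν (-1) r a) • T.qm μ ν c (m - r)) =
      (-(s a : ℂ) * c) • T.qm μ ν c (m + s) := by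
  rw [swap_smul, kpos0_qm T hT le_rfl, smul_zero, zero_add]
  have hbr : ⁅T.k (mIdx 1 s) 0, T.dT ν (-1) r a⁆
      = (-(s a : ℂ)) • T.k (mIdx 0 (r + s)) 0 := by
    rw [dT, lie_sub, lie_smul, hT.br_kk, smul_zero, sub_zero, ← lie_skew, hT.br_dk,
      mAdd_neg1_1, mIdx_succ, if_neg (Fin.succ_ne_zero a), zero_smul, add_zero, neg_smul]
  rw [hbr, map_smul, smul_assoc, k0_qm T hc, idx_rs, smul_smul]

lemma part3 (hT : T.IsToroidal B μ ν) (m r s : Fin N → ℤ) (a : Fin N) (gx : g) :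
    T.uι (T.tg (mIdx 1 s) gx) • (T.uι (T.dT ν (-1) r a) • T.qm μ ν c (m - r)) = 0 := by
  rw [swap_smul, tg_qm T hT (by norm_num : (0:ℤ) ≤ 1), smul_zero, zero_add]
  have hbr : ⁅T.tg (mIdx 1 s) gx, T.dT ν (-1) r a⁆
      = (-(s a : ℂ)) • T.tg (mIdx 0 (r + s)) gx := by
    have h1 : ⁅T.tg (mIdx 1 s) gx, T.k (mIdx (-1) r) 0⁆ = 0 := by
      rw [← lie_skew, hT.br_kg, neg_zero]
    rw [dT, lie_sub, lie_smul, h1, smul_zero, sub_zero, ← lie_skew, hT.br_dg,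
      mAdd_neg1_1, mIdx_succ, neg_smul]
  rw [hbr, map_smul, smul_assoc, tg_qm T hT le_rfl, smul_zero]

lemma part2 (hT : T.IsToroidal B μ ν) (hc : c ≠ 0) (m r s : Fin N → ℤ) (a b : Fin N) :
    T.uι (T.k (mIdx 1 s) b.succ) • (T.uι (T.dT ν (-1) r a) • T.qm μ ν c (m - r)) =
      (if a = b then c else 0) • T.qm μ ν c (m + s) := by
  rw [swap_smul, ksucc_qm T hT (by norm_num : (0:ℤ) ≤ 1), smul_zero, zero_add]
  have hbr : ⁅T.k (mIdx 1 s) b.succ, T.dT ν (-1) r a⁆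
      = -((s a : ℂ) • T.k (mIdx 0 (r + s)) b.succ
          + (if a = b then (1:ℂ) else 0) • T.kSum (mIdx (-1) r) (mIdx 1 s)) := by
    rw [dT, lie_sub, lie_smul, hT.br_kk, smul_zero, sub_zero, ← lie_skew, hT.br_dk,
      mAdd_neg1_1, mIdx_succ]
    simp only [Fin.succ_inj]
  rw [hbr, map_neg, map_add, map_smul, map_smul, neg_smul,
    add_smul, smul_assoc, smul_assoc, ksucc_qm T hT le_rfl, smul_zero, zero_add,
    uι_kSum_smul]
  simp only [mAdd_neg1_1, Fin.sum_univ_succ, mIdx_zero, mIdx_succ,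
    ksucc_qm T hT (le_refl (0:ℤ)), smul_zero, Finset.sum_const_zero, add_zero,
    k0_qm T hc, idx_rs]
  by_cases hab : a = b <;> simp [hab]

end Tor
end
end ToroidalPaper
namespace ToroidalPaper
noncomputable section
namespace Tor
variable {N : ℕ} {g : Type} [LieRing g] [LieAlgebra ℂ g] (T : Tor N g)
attribute [local instance 100] LieRing.ofAssociativeRing
variable {B : g →ₗ[ℂ] g →ₗ[ℂ] ℂ} {μ ν c : ℂ}

lemma idx_sr (m r s : Fin N → ℤ) : s + r + (m - r) = m + s := by ring

lemma part4 (hT : T.IsToroidal B μ ν) (hc : c ≠ 0) (m r s : Fin N → ℤ) (a : Fin N) :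
    T.uι (T.dT0 μ ν 1 s) • (T.uι (T.dT ν (-1) r a) • T.qm μ ν c (m - r)) =
      (((m a : ℂ) - (r a : ℂ)) - 2 * (μ * (s a : ℂ) - ν * (r a : ℂ)) * c) •
        T.qm μ ν c (m + s) := by
  rw [swap_smul, dT0_1_qm T hT, smul_zero, zero_add]
  have hk1d : ⁅T.k (mIdx 1 s) 0, T.d (mIdx (-1) r) a.succ⁆
      = (-(s a : ℂ)) • T.k (mIdx 0 (r + s)) 0 := by
    rw [← lie_skew, hT.br_dk, mAdd_neg1_1, mIdx_succ, if_neg (Fin.succ_ne_zero a),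
      zero_smul, add_zero, neg_smul]
  rw [dT0, dT, add_lie, neg_lie, smul_lie, lie_sub, lie_sub, lie_smul, lie_smul,
    hT.br_dd, hT.br_dk, hk1d, hT.br_kk, kSum]
  simp only [map_add, map_sub, map_neg, map_smul,
    add_smul, sub_smul, neg_smul, smul_assoc, uι_lincomb_smul,
    mAdd_1_neg1, mAdd_neg1_1, mIdx_zero, mIdx_succ, Fin.sum_univ_succ,
    d00_qm T hT hc, d0succ_qm T hT hc, k0_qm T hc,
    ksucc_qm T hT (le_refl (0 : ℤ)), smul_zero, neg_zero, Finset.sum_const_zero,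
    map_zero, zero_smul,
    add_zero, zero_add, Int.cast_neg, Int.cast_one, idx_rs, idx_sr,
    Pi.sub_apply, Pi.add_apply, Int.cast_sub, Int.cast_add, if_pos]
  match_scalars
  field_simp
  ring

end Tor
end
end ToroidalPaper
namespace ToroidalPaper
noncomputable section
namespace Tor
variable {N : ℕ} {g : Type} [LieRing g] [LieAlgebra ℂ g] (T : Tor N g)
attribute [local instance 100] LieRing.ofAssociativeRing
variable {B : g →ₗ[ℂ] g →ₗ[ℂ] ℂ} {μ ν c : ℂ}

lemma part5 (hT : T.IsToroidal B μ ν) (hc : c ≠ 0) (m r s : Fin N → ℤ) (a b : Fin N) :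
    T.uι (T.dT ν 1 s b) • (T.uι (T.dT ν (-1) r a) • T.qm μ ν c (m - r)) =
      ((r b : ℂ) * ((m a : ℂ) - (r a : ℂ)) - (s a : ℂ) * ((m b : ℂ) - (r b : ℂ))
          - (μ * (r b : ℂ) * (s a : ℂ) + ν * (r a : ℂ) * (s b : ℂ)) * c) •
        T.qm μ ν c (m + s) := by
  rw [swap_smul, dT_1_qm T hT, smul_zero, zero_add]
  have hk1d : ⁅T.k (mIdx 1 s) 0, T.d (mIdx (-1) r) a.succ⁆
      = (-(s a : ℂ)) • T.k (mIdx 0 (r + s)) 0 := by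
    rw [← lie_skew, hT.br_dk, mAdd_neg1_1, mIdx_succ, if_neg (Fin.succ_ne_zero a),
      zero_smul, add_zero, neg_smul]
  rw [dT, dT, sub_lie, lie_sub, lie_sub, lie_smul, lie_smul, smul_lie, smul_lie,
    hT.br_dd, hT.br_dk, hk1d, hT.br_kk, kSum]
  simp only [map_add, map_sub, map_neg, map_smul,
    add_smul, sub_smul, neg_smul, smul_assoc, uι_lincomb_smul,
    mAdd_1_neg1, mAdd_neg1_1, mIdx_zero, mIdx_succ, Fin.sum_univ_succ,
    d00_qm T hT hc, d0succ_qm T hT hc, k0_qm T hc,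
    ksucc_qm T hT (le_refl (0 : ℤ)), smul_zero, neg_zero, Finset.sum_const_zero,
    map_zero, zero_smul,
    add_zero, zero_add, Int.cast_neg, Int.cast_one, idx_rs, idx_sr,
    Pi.sub_apply, Pi.add_apply, Int.cast_sub, Int.cast_add,
    Fin.succ_ne_zero, if_false, ite_false, if_pos]
  match_scalars
  field_simp
  ring

end Tor
end
end ToroidalPaper

namespace ToroidalPaper

/-- Lemma 4.6: identities in V_g(c). -/
theorem statement14 (N : ℕ) (hN : 1 ≤ N) (g : Type) [LieRing g] [LieAlgebra ℂ g]
    [FiniteDimensional ℂ g] [LieAlgebra.IsSimple ℂ g]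
    (B : g →ₗ[ℂ] g →ₗ[ℂ] ℂ)
    (hBsymm : ∀ x y : g, B x y = B y x)
    (hBnondeg : ∀ x : g, (∀ y : g, B x y = 0) → x = 0)
    (hBinv : ∀ x y z : g, B ⁅x, y⁆ z = B x ⁅y, z⁆)
    (μ ν : ℂ) (T : Tor N g) (hT : T.IsToroidal B μ ν)
    (c : ℂ) (hc : c ≠ 0) (m r s : Fin N → ℤ) (gx : g) (a b : Fin N) :
    -- (t₀t^s k₀)·(t₀^{-1}t^r d̃_a)·q^{m−r} = −s_a c q^{m+s}
    T.uι (T.k (mIdx 1 s) 0) • (T.uι (T.dT ν (-1) r a) • T.qm μ ν c (m - r)) =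
      (-(s a : ℂ) * c) • T.qm μ ν c (m + s) ∧
    -- (t₀t^s k_b)·(t₀^{-1}t^r d̃_a)·q^{m−r} = δ_{ab} c q^{m+s}
    T.uι (T.k (mIdx 1 s) b.succ) • (T.uι (T.dT ν (-1) r a) • T.qm μ ν c (m - r)) =
      (if a = b then c else 0) • T.qm μ ν c (m + s) ∧
    -- (t₀t^s⊗g)·(t₀^{-1}t^r d̃_a)·q^{m−r} = 0
    T.uι (T.tg (mIdx 1 s) gx) • (T.uι (T.dT ν (-1) r a) • T.qm μ ν c (m - r)) = 0 ∧
    -- (t₀t^s d̃₀)·(t₀^{-1}t^r d̃_a)·q^{m−r} = ((m_a − r_a) − 2(μ s_a − ν r_a)c) q^{m+s}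
    T.uι (T.dT0 μ ν 1 s) • (T.uι (T.dT ν (-1) r a) • T.qm μ ν c (m - r)) =
      (((m a : ℂ) - (r a : ℂ)) - 2 * (μ * (s a : ℂ) - ν * (r a : ℂ)) * c) •
        T.qm μ ν c (m + s) ∧
    -- (t₀t^s d̃_b)·(t₀^{-1}t^r d̃_a)·q^{m−r}
    --   = (r_b(m_a − r_a) − s_a(m_b − r_b) − (μ r_b s_a + ν r_a s_b)c) q^{m+s}
    T.uι (T.dT ν 1 s b) • (T.uι (T.dT ν (-1) r a) • T.qm μ ν c (m - r)) =
      ((r b : ℂ) * ((m a : ℂ) - (r a : ℂ)) - (s a : ℂ) * ((m b : ℂ) - (r b : ℂ))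
          - (μ * (r b : ℂ) * (s a : ℂ) + ν * (r a : ℂ) * (s b : ℂ)) * c) •
        T.qm μ ν c (m + s) := by
  exact ⟨Tor.part1 T hT hc m r s a, Tor.part2 T hT hc m r s a b,
    Tor.part3 T hT m r s a gx, Tor.part4 T hT hc m r s a,
    Tor.part5 T hT hc m r s a b⟩

end ToroidalPaper
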